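/- An m×n bimatrix game (A,B) is a zero-sum equivalent potential game, i.e. (A,B) ∈ (𝓘+𝓔) ∩ (𝓩+𝓔), if and only if there exist vectors u, y ∈ ℝ^m and v, x ∈ ℝ^n such that A_{ij} = u_i + x_j and B_{ij} = v_j + y_i for all i ∈ [m], j ∈ [n]. -/

import Mathlib

open Matrix Filter

abbrev Game (m n : ℕ) := Matrix (Fin m) (Fin n) ℝ × Matrix (Fin m) (Fin n) ℝ

/-- A non-strategic game: player 1's payoff depends only on player 2's action and vice versa. -/
def NonStrategic {m n : ℕ} (G : Game m n) : Prop :=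
  ∃ (x : Fin n → ℝ) (y : Fin m → ℝ), (∀ i j, G.1 i j = x j) ∧ (∀ i j, G.2 i j = y i)

/-- Identical interest games: A = B. -/
def IdInterest {m n : ℕ} (G : Game m n) : Prop := G.1 = G.2

/-- Zero-sum games: A + B = 0. -/
def ZeroSum {m n : ℕ} (G : Game m n) : Prop := G.1 + G.2 = 0

/-- Normalized games: columns of A and rows of B sum to zero. -/
def Normalized {m n : ℕ} (G : Game m n) : Prop :=
  (∀ j, ∑ i, G.1 i j = 0) ∧ (∀ i, ∑ j, G.2 i j = 0)

/-- Potential games: sums of an identical-interest game and a non-strategic game (𝓘+𝓔). -/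
def IsPotentialGame {m n : ℕ} (G : Game m n) : Prop :=
  ∃ I E : Game m n, IdInterest I ∧ NonStrategic E ∧ G = I + E

/-- Games additionally equivalent to a zero-sum game (𝓩+𝓔). -/
def IsZeroSumEquivAdd {m n : ℕ} (G : Game m n) : Prop :=
  ∃ Z E : Game m n, ZeroSum Z ∧ NonStrategic E ∧ G = Z + E

/-- Zero-sum equivalent potential games, 𝓑 = (𝓘+𝓔) ∩ (𝓩+𝓔). -/
def IsZSEP {m n : ℕ} (G : Game m n) : Prop := IsPotentialGame G ∧ IsZeroSumEquivAdd G

/-- Normalized harmonic games: normalized with mA + nB = 0. -/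
def NormHarmonic (m n : ℕ) (G : Game m n) : Prop :=
  Normalized G ∧ (m : ℝ) • G.1 + (n : ℝ) • G.2 = 0

/-- Normalized potential games, 𝓟 = 𝓝 ∩ (𝓘+𝓔). -/
def NormPotential {m n : ℕ} (G : Game m n) : Prop :=
  Normalized G ∧ IsPotentialGame G

/-- Strategic equivalence: G' = (αA, βB) + E with α, β > 0 and E non-strategic. -/
def StratEquiv {m n : ℕ} (G G' : Game m n) : Prop :=
  ∃ α β : ℝ, 0 < α ∧ 0 < β ∧ ∃ E : Game m n,
    NonStrategic E ∧ G'.1 = α • G.1 + E.1 ∧ G'.2 = β • G.2 + E.2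

/-- G ∈ 𝓢(𝓩): G is strategically equivalent to some zero-sum game. -/
def StratEquivZeroSum {m n : ℕ} (G : Game m n) : Prop :=
  ∃ Z : Game m n, ZeroSum Z ∧ StratEquiv G Z

/-- G ∈ 𝓢(𝓘): G is strategically equivalent to some identical interest game. -/
def StratEquivIdInterest {m n : ℕ} (G : Game m n) : Prop :=
  ∃ I : Game m n, IdInterest I ∧ StratEquiv G I

/-- Nash equilibrium of a bimatrix game. -/
def IsNash {m n : ℕ} (G : Game m n) (p : Fin m → ℝ) (q : Fin n → ℝ) : Prop :=
  p ∈ stdSimplex ℝ (Fin m) ∧ q ∈ stdSimplex ℝ (Fin n) ∧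
  (∀ p' ∈ stdSimplex ℝ (Fin m), p' ⬝ᵥ G.1.mulVec q ≤ p ⬝ᵥ G.1.mulVec q) ∧
  (∀ q' ∈ stdSimplex ℝ (Fin n), p ⬝ᵥ G.2.mulVec q' ≤ p ⬝ᵥ G.2.mulVec q)

/-- Discrete-time fictitious play sequence of a bimatrix game. -/
def IsDFP {m n : ℕ} (G : Game m n) (p : ℕ → Fin m → ℝ) (q : ℕ → Fin n → ℝ) : Prop :=
  (∀ t, p t ∈ stdSimplex ℝ (Fin m) ∧ q t ∈ stdSimplex ℝ (Fin n)) ∧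
  ∀ t : ℕ, ∃ (i : Fin m) (j : Fin n),
    (∀ i', (G.1.mulVec (q t)) i' ≤ (G.1.mulVec (q t)) i) ∧
    (∀ j', (G.2.vecMul (p t)) j' ≤ (G.2.vecMul (p t)) j) ∧
    p (t + 1) = ((t : ℝ) / (t + 1)) • p t + ((1 : ℝ) / (t + 1)) • (Pi.single i 1 : Fin m → ℝ) ∧
    q (t + 1) = ((t : ℝ) / (t + 1)) • q t + ((1 : ℝ) / (t + 1)) • (Pi.single j 1 : Fin n → ℝ)

/-- The fictitious play property: every DFP sequence converges to the set of Nash equilibria. -/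
def HasFPP {m n : ℕ} (G : Game m n) : Prop :=
  ∀ p q, IsDFP G p q →
    Tendsto (fun t => Metric.infDist (p t, q t)
      {pq : (Fin m → ℝ) × (Fin n → ℝ) | IsNash G pq.1 pq.2}) atTop (nhds 0)

/-- The class 𝓓: at least one payoff matrix has the form M i j = x i + y j. -/
def InD {m n : ℕ} (G : Game m n) : Prop :=
  (∃ (x : Fin m → ℝ) (y : Fin n → ℝ), ∀ i j, G.1 i j = x i + y j) ∨
  (∃ (x : Fin m → ℝ) (y : Fin n → ℝ), ∀ i j, G.2 i j = x i + y j)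

/-! Both classes are characterised by one additively separable matrix: `G ∈ 𝓘+𝓔` iff
`B - A` is separable and `G ∈ 𝓩+𝓔` iff `A + B` is; since `A` and `B` are the half-sum and
half-difference of these, `G` lies in both classes iff `A` and `B` are themselves separable. -/

def IsAddSeparable {ι κ R : Type*} [Add R] (M : Matrix ι κ R) : Prop :=
  ∃ (a : ι → R) (b : κ → R), ∀ i j, M i j = a i + b j

namespace IsAddSeparable

variable {ι κ R : Type*} {M N : Matrix ι κ R}

theorem add [AddCommMonoid R] (hM : IsAddSeparable M) (hN : IsAddSeparable N) :
    IsAddSeparable (M + N) := by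
  obtain ⟨a, b, hab⟩ := hM
  obtain ⟨c, d, hcd⟩ := hN
  exact ⟨a + c, b + d, fun i j => by simp only [Matrix.add_apply, hab, hcd, Pi.add_apply]; abel⟩

theorem sub [AddCommGroup R] (hM : IsAddSeparable M) (hN : IsAddSeparable N) :
    IsAddSeparable (M - N) := by
  obtain ⟨a, b, hab⟩ := hM
  obtain ⟨c, d, hcd⟩ := hN
  exact ⟨a - c, b - d, fun i j => by simp only [Matrix.sub_apply, hab, hcd, Pi.sub_apply]; abel⟩

theorem smul {S : Type*} [AddZeroClass R] [DistribSMul S R] (s : S) (hM : IsAddSeparable M) :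
    IsAddSeparable (s • M) := by
  obtain ⟨a, b, hab⟩ := hM
  exact ⟨s • a, s • b, fun i j => by simp only [Matrix.smul_apply, hab, smul_add, Pi.smul_apply]⟩

end IsAddSeparable

section Game

variable {m n : ℕ}

theorem isPotentialGame_iff (G : Game m n) :
    IsPotentialGame G ↔ IsAddSeparable (G.2 - G.1) := by
  constructor
  · rintro ⟨I, E, hI, ⟨x, y, hx, hy⟩, rfl⟩
    refine ⟨y, -x, fun i j => ?_⟩
    simp only [Prod.snd_add, Prod.fst_add, Matrix.sub_apply, Matrix.add_apply, hx, hy, Pi.neg_apply,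
      show I.1 = I.2 from hI]
    ring
  · rintro ⟨a, b, hab⟩
    -- `I := A + b` is also `B - a`, so `A - I` depends only on `j` and `B - I` only on `i`.
    refine ⟨(G.1 + of fun _ j => b j, G.1 + of fun _ j => b j), (of fun _ j => -b j, of fun i _ => a i),
      rfl, ⟨-b, a, fun _ _ => rfl, fun _ _ => rfl⟩, Prod.ext ?_ ?_⟩ <;> ext i j
    · simp
    · have := hab i j
      simp only [Matrix.sub_apply] at this
      simp only [Prod.snd_add, Matrix.add_apply, Matrix.of_apply]
      linarith

theorem isZeroSumEquivAdd_iff (G : Game m n) :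
    IsZeroSumEquivAdd G ↔ IsAddSeparable (G.1 + G.2) := by
  constructor
  · rintro ⟨Z, E, hZ, ⟨x, y, hx, hy⟩, rfl⟩
    refine ⟨y, x, fun i j => ?_⟩
    have hZij := congr_fun₂ hZ i j
    simp only [Matrix.add_apply, Matrix.zero_apply] at hZij
    simp only [Prod.fst_add, Prod.snd_add, Matrix.add_apply, hx, hy]
    linarith
  · rintro ⟨a, b, hab⟩
    refine ⟨(G.1 - of fun _ j => b j, G.2 - of fun i _ => a i), (of fun _ j => b j, of fun i _ => a i),
      ?_, ⟨b, a, fun _ _ => rfl, fun _ _ => rfl⟩, Prod.ext ?_ ?_⟩ <;> ext i j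
    · have := hab i j
      simp only [Matrix.add_apply, Matrix.sub_apply, Matrix.of_apply, Matrix.zero_apply] at this ⊢
      linarith
    · simp
    · simp

theorem isZSEP_iff (G : Game m n) :
    IsZSEP G ↔ IsAddSeparable G.1 ∧ IsAddSeparable G.2 := by
  rw [IsZSEP, isPotentialGame_iff, isZeroSumEquivAdd_iff]
  constructor
  · rintro ⟨hdiff, hsum⟩
    have hA : G.1 = (1 / 2 : ℝ) • ((G.1 + G.2) - (G.2 - G.1)) := by
      ext i j; simp only [Matrix.smul_apply, Matrix.sub_apply, Matrix.add_apply, smul_eq_mul]; ring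
    have hB : G.2 = (1 / 2 : ℝ) • ((G.1 + G.2) + (G.2 - G.1)) := by
      ext i j; simp only [Matrix.smul_apply, Matrix.sub_apply, Matrix.add_apply, smul_eq_mul]; ring
    constructor
    · rw [hA]; exact (hsum.sub hdiff).smul _
    · rw [hB]; exact (hsum.add hdiff).smul _
  · rintro ⟨hA, hB⟩
    exact ⟨hB.sub hA, hA.add hB⟩

end Game

theorem stmt18_general {m n : ℕ} (G : Game m n) :
    IsZSEP G ↔
    ∃ (u y : Fin m → ℝ) (v x : Fin n → ℝ),
      (∀ i j, G.1 i j = u i + x j) ∧ (∀ i j, G.2 i j = v j + y i) := by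
  rw [isZSEP_iff]
  constructor
  · rintro ⟨⟨u, x, hA⟩, ⟨y, v, hB⟩⟩
    exact ⟨u, y, v, x, hA, fun i j => (hB i j).trans (add_comm _ _)⟩
  · rintro ⟨u, y, v, x, hA, hB⟩
    exact ⟨⟨u, x, hA⟩, ⟨y, v, fun i j => (hB i j).trans (add_comm _ _)⟩⟩

theorem stmt18 {m n : ℕ} (hm : 1 ≤ m) (hn : 1 ≤ n) (G : Game m n) :
    IsZSEP G ↔
    ∃ (u y : Fin m → ℝ) (v x : Fin n → ℝ),
      (∀ i j, G.1 i j = u i + x j) ∧ (∀ i j, G.2 i j = v j + y i) :=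
  stmt18_general G
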